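/- Let w solve the GEKP weak problem and w₀ the reduced biharmonic problem on a convex polygon, with the a priori bounds ‖w₀‖₃ ≤ C‖f‖₀ and the triharmonic regularity ‖w‖₄ ≲ ι⁻²|w−w₀|₂. Then taking v = w − w₀ in the identity ι²(∇³w,∇³v) + (∇²w,∇²v) − ι²(∂ₙₙₙw, ∂ₙₙv)_{∂Ω} = (∇²w₀,∇²v) yields ι²|w|₃² + |w−w₀|₂² = ι²(∇³w,∇³w₀) − ι²(∂ₙₙₙw, ∂ₙₙw₀)_{∂Ω}. -/

import Mathlib

theorem GEKP_regularity_identity_general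
    (F : Type*) [AddCommGroup F] [Module ℝ F]
    (a3 a2 bnd : F →ₗ[ℝ] F →ₗ[ℝ] ℝ)
    (S : Set F) (ι : ℝ) (w w0 : F)
    (hmem : w - w0 ∈ S)
    (hbw : bnd w w = 0)
    (hid : ∀ v ∈ S, ι ^ 2 * a3 w v + a2 w v - ι ^ 2 * bnd w v = a2 w0 v) :
    ι ^ 2 * a3 w w + a2 (w - w0) (w - w0) = ι ^ 2 * a3 w w0 - ι ^ 2 * bnd w w0 := by
  have htested := hid (w - w0) hmem
  simp only [map_sub, LinearMap.sub_apply] at htested ⊢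
  linear_combination htested + ι ^ 2 * hbw

/-- The key identity in the regularity proof. Abstract Sobolev setting: `a3 u v =
(∇³u, ∇³v)`, `a2 u v = (∇²u, ∇²v)` and `bnd u v = (∂ₙₙₙu, ∂ₙₙv)_{∂Ω}` are bilinear;
`S = H²₀(Ω) ∩ H³(Ω)` so that every `v ∈ S` satisfies `v = ∂ₙv = ∂ₙₜv = 0` on `∂Ω`.
Given that `w` satisfies `ι²(∇³w,∇³v) + (∇²w,∇²v) − ι²(∂ₙₙₙw, ∂ₙₙv)_{∂Ω} = (∇²w₀,∇²v)`
for all `v ∈ S`, that `w − w₀ ∈ S`, and that `(∂ₙₙₙw, ∂ₙₙw)_{∂Ω} = 0` (since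
`∂ₙₙw = 0` on `∂Ω` for `w ∈ H³₀(Ω)`), taking `v = w − w₀` yields
`ι²|w|₃² + |w−w₀|₂² = ι²(∇³w,∇³w₀) − ι²(∂ₙₙₙw, ∂ₙₙw₀)_{∂Ω}`. -/
theorem GEKP_regularity_identity
    (F : Type*) [AddCommGroup F] [Module ℝ F]
    (a3 a2 bnd : F →ₗ[ℝ] F →ₗ[ℝ] ℝ)
    (ha2sym : ∀ u v : F, a2 u v = a2 v u)
    (S : Set F) (ι : ℝ) (w w0 : F)
    (hmem : w - w0 ∈ S)
    (hbw : bnd w w = 0)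
    (hid : ∀ v ∈ S, ι ^ 2 * a3 w v + a2 w v - ι ^ 2 * bnd w v = a2 w0 v) :
    ι ^ 2 * a3 w w + a2 (w - w0) (w - w0) = ι ^ 2 * a3 w w0 - ι ^ 2 * bnd w w0 :=
  GEKP_regularity_identity_general F a3 a2 bnd S ι w w0 hmem hbw hid
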